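/- arXiv:1202.3235 — 3 statements merged into one kernel-verified Lean document; each statement's English description precedes it below -/
import Mathlib

section
/- Let Y ∈ ℂ^{n×p}, S ∈ ℂ^{p×p} invertible, and define F(θ) := Y exp(θS). For the operator 𝓑 given by (𝓑φ)(θ) = ∫₀^θ φ + (B(d/dθ)φ)(0) with B(λ) = M(0)^{-1}(M(0) − M(λ))/λ, one has (𝓑F)(θ) − F(θ) S^{-1} = −M(0)^{-1} 𝕄(Y,S) S^{-1} for all θ; in particular the left-hand side is constant in θ. -/
/-! Since `F⁽ⁱ⁾(0) = Y Sⁱ`, the second term of `𝓑F` is the series `Σ Bc i Y Sⁱ`, and the relation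
`M(0) Bc i = -A (i+1)` telescopes it into `M(0)⁻¹ (M(0) Y - 𝕄(Y,S)) S⁻¹`. The first term is
`∫₀^θ Y exp(sS) ds = Y exp(θS) S⁻¹ - Y S⁻¹`. Adding the two, the `θ`-dependent terms cancel. -/

open NormedSpace
open scoped Matrix

/-- `𝕄(Y,S) = Σ_i A_i Y S^i` where `A_i = M^{(i)}(0)/i!` are the Taylor
coefficients of the analytic matrix function `M`. -/
noncomputable def MMfun {n p : ℕ} (A : ℕ → Matrix (Fin n) (Fin n) ℂ)
    (Y : Matrix (Fin n) (Fin p) ℂ) (S : Matrix (Fin p) (Fin p) ℂ) :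
    Matrix (Fin n) (Fin p) ℂ :=
  ∑' i : ℕ, A i * Y * S ^ i

namespace Matrix

theorem mul_tsum_mul {ι l m n k R : Type*} [Fintype m] [Fintype n] [Semiring R] [TopologicalSpace R]
    [IsTopologicalSemiring R] [T2Space R] {f : ι → Matrix m n R} (hf : Summable f)
    (P : Matrix l m R) (Q : Matrix n k R) :
    P * (∑' i, f i) * Q = ∑' i, P * f i * Q :=
  hf.map_tsum ((addMonoidHomMulRight Q).comp (addMonoidHomMulLeft P))
    ((continuous_const.matrix_mul continuous_id).matrix_mul continuous_const)

section Exp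

-- Differentiating `exp` needs a Banach algebra structure; any submultiplicative norm would do.
attribute [local instance] Matrix.linftyOpNormedRing Matrix.linftyOpNormedAlgebra

variable {m p : Type*} [Fintype p] [DecidableEq p]

theorem hasDerivAt_mul_exp_smul_mul_apply (Y : Matrix m p ℂ) (S Z : Matrix p p ℂ) (a : m) (b : p)
    (t : ℝ) :
    HasDerivAt (fun s : ℝ => (Y * exp ((s : ℂ) • S) * Z) a b)
      ((Y * exp ((t : ℂ) • S) * S * Z) a b) t := by
  let φ : Matrix p p ℂ →L[ℂ] ℂ := LinearMap.toContinuousLinearMap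
    (entryLinearMap ℂ ℂ a b ∘ₗ mulRightLinearMap m ℂ Z ∘ₗ mulLeftLinearMap p ℂ Y)
  have h := (φ.hasFDerivAt.comp_hasDerivAt _ (hasDerivAt_exp_smul_const S (t : ℂ))).comp_ofReal
  convert h using 1
  · rfl
  · change _ = (Y * (exp ((t : ℂ) • S) * S) * Z) a b
    simp only [Matrix.mul_assoc]

theorem integral_mul_exp_smul_apply (Y : Matrix m p ℂ) {S : Matrix p p ℂ} (hS : IsUnit S)
    (a : m) (b : p) (θ : ℝ) :
    ∫ s in (0 : ℝ)..θ, (Y * exp ((s : ℂ) • S)) a b =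
      (Y * exp ((θ : ℂ) • S) * S⁻¹) a b - (Y * S⁻¹) a b := by
  have hderiv (t : ℝ) : HasDerivAt (fun s : ℝ => (Y * exp ((s : ℂ) • S) * S⁻¹) a b)
      ((Y * exp ((t : ℂ) • S)) a b) t := by
    simpa only [mul_nonsing_inv_cancel_right S _ ((isUnit_iff_isUnit_det S).mp hS)] using
      hasDerivAt_mul_exp_smul_mul_apply Y S S⁻¹ a b t
  have hcont : Continuous fun s : ℝ => (Y * exp ((s : ℂ) • S)) a b :=
    continuous_iff_continuousAt.2 fun t => by
      simpa only [Matrix.mul_one] using (hasDerivAt_mul_exp_smul_mul_apply Y S 1 a b t).continuousAt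
  rw [intervalIntegral.integral_eq_sub_of_hasDerivAt (fun t _ => hderiv t)
    (hcont.intervalIntegrable 0 θ), Complex.ofReal_zero, zero_smul, exp_zero, Matrix.mul_one]

end Exp

end Matrix

section Series

variable {n p : ℕ} {A Bc : ℕ → Matrix (Fin n) (Fin n) ℂ} {Y : Matrix (Fin n) (Fin p) ℂ}
  {S : Matrix (Fin p) (Fin p) ℂ}

theorem MMfun_eq_mul_add_tsum_succ (hsumM : Summable fun i : ℕ => A i * Y * S ^ i) :
    MMfun A Y S = A 0 * Y + ∑' i : ℕ, A (i + 1) * Y * S ^ (i + 1) := by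
  rw [MMfun, hsumM.tsum_eq_zero_add, pow_zero, Matrix.mul_one]

theorem mul_tsum_mul_pow_mul_eq_sub_MMfun (hBc : ∀ i : ℕ, A 0 * Bc i = -(A (i + 1)))
    (hsumB : Summable fun i : ℕ => Bc i * (Y * S ^ i))
    (hsumM : Summable fun i : ℕ => A i * Y * S ^ i) :
    A 0 * (∑' i : ℕ, Bc i * (Y * S ^ i)) * S = A 0 * Y - MMfun A Y S := by
  have hterm (i : ℕ) : A 0 * (Bc i * (Y * S ^ i)) * S = -(A (i + 1) * Y * S ^ (i + 1)) := by
    rw [← Matrix.mul_assoc, hBc, pow_succ]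
    simp only [Matrix.neg_mul, Matrix.mul_assoc]
  rw [Matrix.mul_tsum_mul hsumB, tsum_congr hterm, tsum_neg, MMfun_eq_mul_add_tsum_succ hsumM]
  abel

theorem tsum_mul_mul_pow_eq_sub_MMfun (hS : IsUnit S) (hM0 : IsUnit (A 0))
    (hBc : ∀ i : ℕ, A 0 * Bc i = -(A (i + 1)))
    (hsumB : Summable fun i : ℕ => Bc i * (Y * S ^ i))
    (hsumM : Summable fun i : ℕ => A i * Y * S ^ i) :
    ∑' i : ℕ, Bc i * (Y * S ^ i) = Y * S⁻¹ - (A 0)⁻¹ * MMfun A Y S * S⁻¹ := by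
  have hAdet := (Matrix.isUnit_iff_isUnit_det _).mp hM0
  have hSdet := (Matrix.isUnit_iff_isUnit_det _).mp hS
  calc ∑' i : ℕ, Bc i * (Y * S ^ i)
      = (A 0)⁻¹ * (A 0 * (∑' i : ℕ, Bc i * (Y * S ^ i)) * S) * S⁻¹ := by
        rw [Matrix.mul_assoc (A 0), Matrix.nonsing_inv_mul_cancel_left (A 0) _ hAdet,
          Matrix.mul_nonsing_inv_cancel_right S _ hSdet]
    _ = Y * S⁻¹ - (A 0)⁻¹ * MMfun A Y S * S⁻¹ := by
        rw [mul_tsum_mul_pow_mul_eq_sub_MMfun hBc hsumB hsumM, Matrix.mul_sub, Matrix.sub_mul,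
          Matrix.nonsing_inv_mul_cancel_left (A 0) Y hAdet]

end Series

/-- Lemma A.1: let `M(λ) = Σ_i λ^i A_i` be analytic with `M(0) = A 0`
invertible, and let `B(λ) = M(0)⁻¹(M(0)−M(λ))/λ` have Taylor coefficients `Bc i`
(equivalently `M(0)·Bc i = −A_{i+1}`).  For `F(θ) = Y exp(θS)` with `S` invertible,
the operator `𝓑`, `(𝓑φ)(θ) = ∫₀^θ φ + (B(d/dθ)φ)(0)` (where
`(B(d/dθ)F)(0) = Σ_i Bc i · F^{(i)}(0) = Σ_i Bc i · Y S^i`), satisfies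
`(𝓑F)(θ) − F(θ)S⁻¹ = −M(0)⁻¹ 𝕄(Y,S) S⁻¹` for all `θ` (entrywise). -/
theorem stmt8 {n p : ℕ} (A Bc : ℕ → Matrix (Fin n) (Fin n) ℂ)
    (Y : Matrix (Fin n) (Fin p) ℂ) (S : Matrix (Fin p) (Fin p) ℂ)
    (hS : IsUnit S) (hM0 : IsUnit (A 0))
    (hBc : ∀ i : ℕ, A 0 * Bc i = -(A (i + 1)))
    (hsumB : Summable fun i : ℕ => Bc i * (Y * S ^ i))
    (hsumM : Summable fun i : ℕ => A i * Y * S ^ i) :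
    ∀ (θ : ℝ) (a : Fin n) (b : Fin p),
      ((∫ s in (0:ℝ)..θ, (Y * exp ((s : ℂ) • S)) a b) +
          (∑' i : ℕ, Bc i * (Y * S ^ i)) a b) -
        ((Y * exp ((θ : ℂ) • S)) * S⁻¹) a b =
      (-((A 0)⁻¹ * MMfun A Y S * S⁻¹)) a b := by
  intro θ a b
  rw [Matrix.integral_mul_exp_smul_apply Y hS, tsum_mul_mul_pow_eq_sub_MMfun hS hM0 hBc hsumB hsumM]
  simp only [Matrix.sub_apply, Matrix.neg_apply]
  ring
end

section
/- Given the combination of the previous two facts: for φ as in the structured-action theorem, the function φ₊ defined by c₊ = S^{-1}c, x_{+,j} = x_{j−1}/j, and x_{+,0} = −M(0)^{-1}(𝕄_N(Y,S)c₊ + Σ_{i=1}^N M^{(i)}(0)x_{+,i}) equals (𝓑φ)(θ) for all θ, where (𝓑φ)(θ) = ∫₀^θ φ(ŝ)dŝ + (B(d/dθ)φ)(0) with B(λ) = M(0)^{-1}(M(0)−M(λ))/λ. -/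
open NormedSpace
open scoped Matrix

/-- `expTail k θ S = exp(θS) − Σ_{i<k} (θ^i/i!) S^i`; the paper's `exp_N` is
`expTail (N+1)`. -/
noncomputable def expTail {p : ℕ} (k : ℕ) (θ : ℂ) (S : Matrix (Fin p) (Fin p) ℂ) :
    Matrix (Fin p) (Fin p) ℂ :=
  exp (θ • S) - ∑ i ∈ Finset.range k, (θ ^ i / (i.factorial : ℂ)) • S ^ i

/-!
Both `φ` and `φ₊` have the form `θ ↦ Y expTail k θ S c + Σ_{j<k} θ^j x_j`. Since
`d/dθ expTail (k+1) θ S = expTail k θ S * S`, the relations `S c₊ = c` and `(j+1) x_{+,j+1} = x_j`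
make `φ₊` a primitive of `φ`, so `∫₀^θ φ = φ₊(θ) − x_{+,0}`. It remains to see
`(B(d/dθ)φ)(0) = x_{+,0}`: multiplying by `M(0)` turns the coefficients `Bc i` into
`−M^{(i+1)}(0)/(i+1)!`, and the resulting series splits into the terms `i < N`, which give
`Σ_{i=1}^N M^{(i)}(0) x_{+,i}`, and the tail `𝕄_N(Y,S) c₊`.
-/

lemma natCast_add_one_mul_inv_factorial_succ {K : Type*} [Field K] [CharZero K] (i : ℕ) :
    ((i : K) + 1) * ((i + 1).factorial : K)⁻¹ = (i.factorial : K)⁻¹ := by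
  rw [Nat.factorial_succ, Nat.cast_mul, Nat.cast_succ, mul_inv, ← mul_assoc,
    mul_inv_cancel₀ (Nat.cast_add_one_ne_zero i), one_mul]

lemma hasDerivAt_sum_range_succ_pow_smul {𝕜 E : Type*} [NontriviallyNormedField 𝕜]
    [NormedAddCommGroup E] [NormedSpace 𝕜 E] (a : ℕ → E) (k : ℕ) (z : 𝕜) :
    HasDerivAt (fun w : 𝕜 => ∑ j ∈ Finset.range (k + 1), w ^ j • a j)
      (∑ j ∈ Finset.range k, z ^ j • (((j : 𝕜) + 1) • a (j + 1))) z := by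
  have h := HasDerivAt.fun_sum (u := Finset.range (k + 1))
    fun j _ => (hasDerivAt_pow j z).smul_const (a j)
  convert h using 1
  rw [Finset.sum_range_succ']
  simp [smul_smul, mul_comm]

section MatrixExp

attribute [local instance] Matrix.linftyOpNormedRing Matrix.linftyOpNormedAlgebra

variable {m : Type*} {p : ℕ}

lemma hasDerivAt_expTail_succ (k : ℕ) (S : Matrix (Fin p) (Fin p) ℂ) (z : ℂ) :
    HasDerivAt (fun w : ℂ => expTail (k + 1) w S) (expTail k z S * S) z := by
  have hsum := hasDerivAt_sum_range_succ_pow_smul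
    (fun i => ((i.factorial : ℂ))⁻¹ • S ^ i) k z
  have hfun : (fun w : ℂ => expTail (k + 1) w S) = fun w =>
      exp (w • S) - ∑ j ∈ Finset.range (k + 1), w ^ j • ((j.factorial : ℂ))⁻¹ • S ^ j := by
    simp only [expTail, div_eq_mul_inv, mul_smul]
  have hder : expTail k z S * S = exp (z • S) * S -
      ∑ j ∈ Finset.range k, z ^ j • ((j : ℂ) + 1) • ((j + 1).factorial : ℂ)⁻¹ • S ^ (j + 1) := by
    simp only [expTail, sub_mul, Finset.sum_mul, smul_smul,
      natCast_add_one_mul_inv_factorial_succ, pow_succ, div_eq_mul_inv, smul_mul_assoc]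
  rw [hfun, hder]
  exact (hasDerivAt_exp_smul_const S z).sub hsum

noncomputable def mulMulVecCLM (Y : Matrix m (Fin p) ℂ) (v : Fin p → ℂ) :
    Matrix (Fin p) (Fin p) ℂ →L[ℂ] m → ℂ :=
  LinearMap.toContinuousLinearMap
    { toFun := fun M => (Y * M) *ᵥ v
      map_add' := fun M₁ M₂ => by rw [Matrix.mul_add, Matrix.add_mulVec]
      map_smul' := fun a M => by simp [Matrix.mul_smul, Matrix.smul_mulVec] }

lemma hasDerivAt_mulVec_expTail_succ [Fintype m] (Y : Matrix m (Fin p) ℂ)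
    (S : Matrix (Fin p) (Fin p) ℂ) (v : Fin p → ℂ) (k : ℕ) (z : ℂ) :
    HasDerivAt (fun w : ℂ => (Y * expTail (k + 1) w S) *ᵥ v)
      ((Y * expTail k z S) *ᵥ (S *ᵥ v)) z := by
  have h := (mulMulVecCLM Y v).hasFDerivAt.comp_hasDerivAt z (hasDerivAt_expTail_succ k S z)
  rw [Matrix.mulVec_mulVec, Matrix.mul_assoc]
  exact h

lemma continuous_mulVec_expTail (Y : Matrix m (Fin p) ℂ) (S : Matrix (Fin p) (Fin p) ℂ)
    (v : Fin p → ℂ) (k : ℕ) : Continuous fun w : ℂ => (Y * expTail k w S) *ᵥ v := by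
  have h : Continuous fun w : ℂ => expTail k w S := by
    unfold expTail
    fun_prop
  exact (mulMulVecCLM Y v).continuous.comp h

end MatrixExp

/-- The shape `θ ↦ Y exp_{N-1}(θS) c + Σ_{j<N} θ^j x_j` of `φ` and `φ₊`. -/
noncomputable def structuredFun {m : Type*} {p : ℕ} (Y : Matrix m (Fin p) ℂ)
    (S : Matrix (Fin p) (Fin p) ℂ) (c : Fin p → ℂ) (N : ℕ) (x : ℕ → m → ℂ) (θ : ℂ) : m → ℂ :=
  (Y * expTail N θ S) *ᵥ c + ∑ j ∈ Finset.range N, θ ^ j • x j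

lemma expTail_succ_zero {p : ℕ} (k : ℕ) (S : Matrix (Fin p) (Fin p) ℂ) :
    expTail (k + 1) 0 S = 0 := by
  simp [expTail, Finset.sum_range_succ', NormedSpace.exp_zero]

section StructuredFun

variable {m : Type*} {p : ℕ} (Y : Matrix m (Fin p) ℂ) (S : Matrix (Fin p) (Fin p) ℂ)
  {c c' : Fin p → ℂ} {x x' : ℕ → m → ℂ}

lemma structuredFun_succ_zero (c : Fin p → ℂ) (N : ℕ) (x : ℕ → m → ℂ) :
    structuredFun Y S c (N + 1) x 0 = x 0 := by
  simp [structuredFun, expTail_succ_zero, Finset.sum_range_succ']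

lemma continuous_structuredFun (c : Fin p → ℂ) (N : ℕ) (x : ℕ → m → ℂ) :
    Continuous (structuredFun Y S c N x) :=
  (continuous_mulVec_expTail Y S c N).add (by fun_prop)

variable [Fintype m]

lemma hasDerivAt_structuredFun_succ (hc : S *ᵥ c' = c)
    (hx : ∀ j : ℕ, ((j : ℂ) + 1) • x' (j + 1) = x j) (N : ℕ) (z : ℂ) :
    HasDerivAt (structuredFun Y S c' (N + 1) x') (structuredFun Y S c N x z) z := by
  have h := (hasDerivAt_mulVec_expTail_succ Y S c' N z).add
    (hasDerivAt_sum_range_succ_pow_smul x' N z)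
  simp only [hc, hx] at h
  exact h

lemma integral_structuredFun (hc : S *ᵥ c' = c)
    (hx : ∀ j : ℕ, ((j : ℂ) + 1) • x' (j + 1) = x j) (N : ℕ) (θ : ℝ) (k : m) :
    ∫ s in (0 : ℝ)..θ, structuredFun Y S c N x s k =
      structuredFun Y S c' (N + 1) x' θ k - x' 0 k := by
  rw [← structuredFun_succ_zero Y S c' N x', ← Complex.ofReal_zero]
  refine intervalIntegral.integral_eq_sub_of_hasDerivAt
    (fun t _ => (hasDerivAt_pi.1 (hasDerivAt_structuredFun_succ Y S hc hx N t) k).comp_ofReal) ?_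
  exact ((continuous_apply k).comp
    ((continuous_structuredFun Y S c N x).comp Complex.continuous_ofReal)).intervalIntegrable _ _

end StructuredFun

lemma sum_Icc_one_eq_sum_range {M : Type*} [AddCommMonoid M] (f : ℕ → M) (N : ℕ) :
    ∑ i ∈ Finset.Icc 1 N, f i = ∑ i ∈ Finset.range N, f (i + 1) := by
  induction N with
  | zero => simp
  | succ n ih => rw [Finset.sum_Icc_succ_top (by omega), ih, Finset.sum_range_succ]

lemma tsum_mulVec_eq_neg_inv_mulVec {m : Type*} [Fintype m] [DecidableEq m] {M₀ : Matrix m m ℂ}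
    (hM₀ : IsUnit M₀) {A B : ℕ → Matrix m m ℂ} (hAB : ∀ i, M₀ * B i = -A i) {v : ℕ → m → ℂ}
    (hv : Summable fun i => B i *ᵥ v i) (N : ℕ) :
    ∑' i, B i *ᵥ v i =
      -(M₀⁻¹ *ᵥ (∑' i, A (i + N) *ᵥ v (i + N) + ∑ i ∈ Finset.range N, A i *ᵥ v i)) := by
  let L := (Matrix.mulVecLin M₀).toContinuousLinearMap
  have hL : ∀ i, L (B i *ᵥ v i) = -(A i *ᵥ v i) := fun i => by
    simp [L, Matrix.mulVec_mulVec, hAB, Matrix.neg_mulVec]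
  have hA : Summable fun i => A i *ᵥ v i := by
    simpa [hL] using (hv.mapL L).neg
  have hM₀B : M₀ *ᵥ ∑' i, B i *ᵥ v i = -∑' i, A i *ᵥ v i := by
    rw [← tsum_neg, ← tsum_congr hL]
    exact L.map_tsum hv
  rw [add_comm, hA.sum_add_tsum_nat_add, ← neg_neg (∑' i, A i *ᵥ v i), ← hM₀B,
    Matrix.mulVec_neg, Matrix.mulVec_mulVec,
    Matrix.nonsing_inv_mul _ ((Matrix.isUnit_iff_isUnit_det _).mp hM₀), Matrix.one_mulVec, neg_neg]

/-- `Mder i = M^{(i)}(0)`, `Bc i` are the Taylor coefficients of `B`, and `Cφ` encodes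
`(B(d/dθ)φ)(0) = Σ_i Bc i φ^{(i)}(0)`. -/
theorem stmt15_general {n p : ℕ} (Mder : ℕ → Matrix (Fin n) (Fin n) ℂ)
    (Bc : ℕ → Matrix (Fin n) (Fin n) ℂ)
    (hM0 : IsUnit (Mder 0))
    (hBc : ∀ i : ℕ, Mder 0 * Bc i = -((((i + 1).factorial : ℂ))⁻¹ • Mder (i + 1)))
    (Y : Matrix (Fin n) (Fin p) ℂ) (S : Matrix (Fin p) (Fin p) ℂ) (hS : IsUnit S)
    (c : Fin p → ℂ) (N : ℕ) (x : ℕ → Fin n → ℂ)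
    (hsumC : Summable fun i : ℕ =>
      Bc i *ᵥ (if i < N then (i.factorial : ℂ) • x i else (Y * S ^ i) *ᵥ c)) :
    let φ : ℝ → Fin n → ℂ := fun θ =>
      (Y * expTail N (θ : ℂ) S) *ᵥ c + ∑ j ∈ Finset.range N, (θ : ℂ) ^ j • x j
    let cp : Fin p → ℂ := S⁻¹ *ᵥ c
    let xp1 : ℕ → Fin n → ℂ := fun j => ((j : ℂ))⁻¹ • x (j - 1)
    let MN : Fin n → ℂ := ∑' i : ℕ,
      (((i + N + 1).factorial : ℂ))⁻¹ • (Mder (i + N + 1) *ᵥ ((Y * S ^ (i + N + 1)) *ᵥ cp))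
    let x0 : Fin n → ℂ :=
      -((Mder 0)⁻¹ *ᵥ (MN + ∑ i ∈ Finset.Icc 1 N, Mder i *ᵥ xp1 i))
    let xp : ℕ → Fin n → ℂ := fun j => if j = 0 then x0 else xp1 j
    let φp : ℝ → Fin n → ℂ := fun θ =>
      (Y * expTail (N + 1) (θ : ℂ) S) *ᵥ cp +
        ∑ j ∈ Finset.range (N + 1), (θ : ℂ) ^ j • xp j
    let Cφ : Fin n → ℂ := ∑' i : ℕ,
      Bc i *ᵥ (if i < N then (i.factorial : ℂ) • x i else (Y * S ^ i) *ᵥ c)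
    ∀ (θ : ℝ) (k : Fin n),
      φp θ k = (∫ s in (0:ℝ)..θ, φ s k) + Cφ k := by
  intro φ cp xp1 MN x0 xp φp Cφ θ k
  have hc : S *ᵥ cp = c := by
    rw [Matrix.mulVec_mulVec, Matrix.mul_nonsing_inv _ ((Matrix.isUnit_iff_isUnit_det S).mp hS),
      Matrix.one_mulVec]
  have hx : ∀ j : ℕ, ((j : ℂ) + 1) • xp (j + 1) = x j := fun j => by
    simp [xp, xp1, smul_smul, mul_inv_cancel₀ (Nat.cast_add_one_ne_zero (R := ℂ) j)]
  have hI : ∫ s in (0 : ℝ)..θ, φ s k = φp θ k - x0 k :=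
    integral_structuredFun Y S hc hx N θ k
  have hC : Cφ = x0 := by
    simp only [Cφ, x0]
    rw [tsum_mulVec_eq_neg_inv_mulVec (A := fun i => (((i + 1).factorial : ℂ))⁻¹ • Mder (i + 1))
      hM0 hBc hsumC N]
    congr 3
    · refine tsum_congr fun i => ?_
      have hpow : (Y * S ^ (i + N + 1)) *ᵥ cp = (Y * S ^ (i + N)) *ᵥ c := by
        rw [pow_succ, ← Matrix.mul_assoc, ← Matrix.mulVec_mulVec, hc]
      rw [if_neg (by omega), hpow, Matrix.smul_mulVec]
    · rw [sum_Icc_one_eq_sum_range]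
      refine Finset.sum_congr rfl fun i hi => ?_
      simp [Finset.mem_range.mp hi, xp1, Matrix.smul_mulVec, Matrix.mulVec_smul, smul_smul,
        Nat.factorial_succ, Nat.factorial_ne_zero]
  rw [hI, hC, sub_add_cancel]

/-- Theorem 4.1, structured action: for
`φ(θ) = Y exp_{N−1}(θS)c + Σ_{j<N} θ^j x_j`, the function `φ₊` defined by
`c₊ = S⁻¹c`, `x_{+,j} = x_{j−1}/j` and
`x_{+,0} = −M(0)⁻¹(𝕄_N(Y,S)c₊ + Σ_{i=1}^N M^{(i)}(0)x_{+,i})`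
equals `(𝓑φ)(θ) = ∫₀^θ φ(ŝ)dŝ + (B(d/dθ)φ)(0)` for all `θ`, where
`B(λ) = M(0)⁻¹(M(0)−M(λ))/λ` has Taylor coefficients `Bc i`
(so `M(0)·Bc i = −M^{(i+1)}(0)/(i+1)!`) and
`(B(d/dθ)φ)(0) = Σ_i Bc i · φ^{(i)}(0)` with `φ^{(i)}(0) = i! x_i` for `i < N`
and `φ^{(i)}(0) = Y S^i c` for `i ≥ N`.  Here `Mder i = M^{(i)}(0)`. -/
theorem stmt15 {n p : ℕ} (Mder : ℕ → Matrix (Fin n) (Fin n) ℂ)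
    (Bc : ℕ → Matrix (Fin n) (Fin n) ℂ)
    (hM0 : IsUnit (Mder 0))
    (hBc : ∀ i : ℕ, Mder 0 * Bc i = -((((i + 1).factorial : ℂ))⁻¹ • Mder (i + 1)))
    (Y : Matrix (Fin n) (Fin p) ℂ) (S : Matrix (Fin p) (Fin p) ℂ) (hS : IsUnit S)
    (c : Fin p → ℂ) (N : ℕ) (x : ℕ → Fin n → ℂ)
    (hsumTail : Summable fun i : ℕ =>
      (((i + N + 1).factorial : ℂ))⁻¹ •
        (Mder (i + N + 1) *ᵥ ((Y * S ^ (i + N + 1)) *ᵥ (S⁻¹ *ᵥ c))))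
    (hsumC : Summable fun i : ℕ =>
      Bc i *ᵥ (if i < N then (i.factorial : ℂ) • x i else (Y * S ^ i) *ᵥ c)) :
    let φ : ℝ → Fin n → ℂ := fun θ =>
      (Y * expTail N (θ : ℂ) S) *ᵥ c + ∑ j ∈ Finset.range N, (θ : ℂ) ^ j • x j
    let cp : Fin p → ℂ := S⁻¹ *ᵥ c
    let xp1 : ℕ → Fin n → ℂ := fun j => ((j : ℂ))⁻¹ • x (j - 1)
    let MN : Fin n → ℂ := ∑' i : ℕ,
      (((i + N + 1).factorial : ℂ))⁻¹ • (Mder (i + N + 1) *ᵥ ((Y * S ^ (i + N + 1)) *ᵥ cp))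
    let x0 : Fin n → ℂ :=
      -((Mder 0)⁻¹ *ᵥ (MN + ∑ i ∈ Finset.Icc 1 N, Mder i *ᵥ xp1 i))
    let xp : ℕ → Fin n → ℂ := fun j => if j = 0 then x0 else xp1 j
    let φp : ℝ → Fin n → ℂ := fun θ =>
      (Y * expTail (N + 1) (θ : ℂ) S) *ᵥ cp +
        ∑ j ∈ Finset.range (N + 1), (θ : ℂ) ^ j • xp j
    let Cφ : Fin n → ℂ := ∑' i : ℕ,
      Bc i *ᵥ (if i < N then (i.factorial : ℂ) • x i else (Y * S ^ i) *ᵥ c)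
    ∀ (θ : ℝ) (k : Fin n),
      φp θ k = (∫ s in (0:ℝ)..θ, φ s k) + Cφ k :=
  stmt15_general Mder Bc hM0 hBc Y S hS c N x hsumC
end

section
/- Let F : ℂ → ℂ^{n×k} have columns orthonormal with respect to the inner product ⟨φ,ψ⟩ = Σ_{i≥0} z_i^H x_i on Taylor coefficients, and let φ be a function in the span of exponential-plus-polynomial structured functions with coefficient representation (c₊, x₊). With h := V^H x₊ + C^H (Σ_{i=N+1}^∞ (S^i)^H Y^H Y S^i/(i!)²) c₊, the function φ_⊥ represented by c_⊥ = c₊ − Ch, x_⊥ = x₊ − Vh is orthogonal to every column of F, and φ = φ_⊥ + F h. -/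
open scoped Matrix

/-- Theorem 4.2, orthogonal complement for structured functions:
let `F(θ) = Y exp_N(θS)C + (1,θ,…,θ^N)⊗Iₙ · V` have columns orthonormal w.r.t.
the Taylor-coefficient inner product, whose Gram matrix is
`Vᴴ V + Cᴴ W C` with `W = Σ_{i>N} (Sⁱ)ᴴYᴴY Sⁱ/(i!)²`; orthonormality means this
Gram matrix is `I_k`.  For `φ` represented by `(c₊, x₊)` and
`h = Vᴴx₊ + Cᴴ W c₊`, the function `φ_⊥` represented by `c_⊥ = c₊ − Ch`,
`x_⊥ = x₊ − Vh` is orthogonal to every column of `F`, and `φ = φ_⊥ + F h`. -/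
theorem stmt16 {n p k N : ℕ}
    (Y : Matrix (Fin n) (Fin p) ℂ) (S : Matrix (Fin p) (Fin p) ℂ)
    (C : Matrix (Fin p) (Fin k) ℂ) (V : Matrix (Fin ((N + 1) * n)) (Fin k) ℂ)
    (W : Matrix (Fin p) (Fin p) ℂ)
    (hW : W = ∑' i : ℕ, ((((i + N + 1).factorial : ℂ)) ^ 2)⁻¹ •
      ((S ^ (i + N + 1))ᴴ * Yᴴ * Y * S ^ (i + N + 1)))
    (horth : Vᴴ * V + Cᴴ * W * C = 1)
    (cp : Fin p → ℂ) (xp : Fin ((N + 1) * n) → ℂ) :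
    let h : Fin k → ℂ := Vᴴ *ᵥ xp + Cᴴ *ᵥ (W *ᵥ cp)
    let cperp : Fin p → ℂ := cp - C *ᵥ h
    let xperp : Fin ((N + 1) * n) → ℂ := xp - V *ᵥ h
    (Vᴴ *ᵥ xperp + Cᴴ *ᵥ (W *ᵥ cperp) = 0) ∧
      cp = cperp + C *ᵥ h ∧ xp = xperp + V *ᵥ h := by
  intro h cperp xperp
  refine ⟨?_, by simp [cperp], by simp [xperp]⟩
  have key : (Vᴴ * V + Cᴴ * W * C) *ᵥ h = h := by rw [horth, Matrix.one_mulVec]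
  calc Vᴴ *ᵥ xperp + Cᴴ *ᵥ (W *ᵥ cperp)
      = (Vᴴ *ᵥ xp + Cᴴ *ᵥ (W *ᵥ cp)) - (Vᴴ * V + Cᴴ * W * C) *ᵥ h := by
        simp only [xperp, cperp, Matrix.mulVec_sub, Matrix.add_mulVec,
          Matrix.mulVec_mulVec, Matrix.mul_assoc]
        abel
    _ = 0 := by rw [key]; simp [h]
end
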